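/- arXiv:2203.01518 — 4 statements merged into one kernel-verified Lean document; each statement's English description precedes it below -/
import Mathlib

section
/- Suppose for all μ, ν ∈ K = K1 × ⋯ × KN the inequality ∑_{j=1}^N (F_j(μ) + F_j(ν)) ≥ ∑_{j=1}^N (F_j(ν_j, μ_{-j}) + F_j(μ_j, ν_{-j})) holds. If x_j ∈ ∂_{μ_j}F_j(μ) and y_j ∈ ∂_{μ_j}F_j(ν) for each j, then ∑_{j=1}^N ⟨μ_j − ν_j, x_j − y_j⟩ ≥ 0. -/
/-- The partial subdifferential of player `j`'s cost at `μ`. -/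
def partialSubdiff {X : Type*} [NormedAddCommGroup X] [NormedSpace ℝ X] {N : ℕ}
    (K : Fin N → Set (X →L[ℝ] ℝ)) (F : Fin N → ((Fin N → (X →L[ℝ] ℝ)) → ℝ))
    (μ : Fin N → (X →L[ℝ] ℝ)) (j : Fin N) : Set X :=
  {x | ∀ ν ∈ K j, F j (Function.update μ j ν) ≥ F j μ + (ν - μ j) x}

/-- If the costs satisfy the integrated monotonicity inequality, then the game is monotone. -/
theorem monotone_of_sum_ineq {X : Type*} [NormedAddCommGroup X] [NormedSpace ℝ X] {N : ℕ}
    (K : Fin N → Set (X →L[ℝ] ℝ)) (F : Fin N → ((Fin N → (X →L[ℝ] ℝ)) → ℝ))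
    (hmono : ∀ μ ν : Fin N → (X →L[ℝ] ℝ), (∀ j, μ j ∈ K j) → (∀ j, ν j ∈ K j) →
      ∑ j, (F j μ + F j ν) ≥
        ∑ j, (F j (Function.update μ j (ν j)) + F j (Function.update ν j (μ j))))
    (μ ν : Fin N → (X →L[ℝ] ℝ)) (hμ : ∀ j, μ j ∈ K j) (hν : ∀ j, ν j ∈ K j)
    (x y : Fin N → X)
    (hx : ∀ j, x j ∈ partialSubdiff K F μ j) (hy : ∀ j, y j ∈ partialSubdiff K F ν j) :
    ∑ j, (μ j - ν j) (x j - y j) ≥ 0 := by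
  have h1 : ∀ j, F j (Function.update μ j (ν j)) ≥ F j μ + (ν j - μ j) (x j) :=
    fun j => hx j (ν j) (hν j)
  have h2 : ∀ j, F j (Function.update ν j (μ j)) ≥ F j ν + (μ j - ν j) (y j) :=
    fun j => hy j (μ j) (hμ j)
  have hsum : ∑ j, (F j (Function.update μ j (ν j)) + F j (Function.update ν j (μ j)))
      ≥ ∑ j, (F j μ + F j ν) + ∑ j, ((ν j - μ j) (x j) + (μ j - ν j) (y j)) := by
    rw [← Finset.sum_add_distrib]
    apply Finset.sum_le_sum
    intro j _
    have := h1 j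
    have := h2 j
    simp only [ContinuousLinearMap.sub_apply] at *
    linarith
  have hkey : ∑ j, ((ν j - μ j) (x j) + (μ j - ν j) (y j)) ≤ 0 := by
    have := hmono μ ν hμ hν
    linarith
  have : ∑ j, (μ j - ν j) (x j - y j)
      = -∑ j, ((ν j - μ j) (x j) + (μ j - ν j) (y j)) := by
    rw [← Finset.sum_neg_distrib]
    apply Finset.sum_congr rfl
    intro j _
    simp only [ContinuousLinearMap.sub_apply, map_sub]
    ring
  rw [this]
  linarith
end

section
/- Let S be a compact metric space, f_j : S^N → ℝ continuous, and define F_j(μ) = ∫_{S^N} f_j(s) dμ_1(s_1)⋯dμ_N(s_N) for μ ∈ P(S)^N. Then the inequality ∑_j (F_j(μ) + F_j(ν)) ≥ ∑_j (F_j(ν_j, μ_{-j}) + F_j(μ_j, ν_{-j})) holds for all μ, ν ∈ P(S)^N if and only if ∑_j (f_j(s) + f_j(t)) ≥ ∑_j (f_j(s_j, t_{-j}) + f_j(t_j, s_{-j})) holds for all s, t ∈ S^N. -/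
/-!
The mixed difference is the integral of the pure difference `monotonicityGap f s t` against
`(⊗ μ) ⊗ (⊗ ν)`: the product measure `⊗ (ν_j, μ_{-j})` is the image of `(⊗ μ) ⊗ (⊗ ν)` under
`(s, t) ↦ (t_j, s_{-j})`. So a pointwise nonnegative gap integrates to a nonnegative one, and
Dirac masses at `s` and `t` recover the pointwise gap from the integrated one.
-/

open MeasureTheory Function Set

namespace MeasureTheory.Measure

variable {ι : Type*} [Fintype ι] {α : ι → Type*} [∀ i, MeasurableSpace (α i)]

theorem pi_dirac (x : ∀ i, α i) : Measure.pi (fun i => dirac (x i)) = dirac x := by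
  refine pi_eq (μ := fun i => dirac (x i)) fun A hA => ?_
  rw [dirac_apply' _ (.univ_pi hA)]
  simp only [dirac_apply' _ (hA _)]
  by_cases hx : x ∈ univ.pi A
  · simp [indicator_of_mem hx, indicator_of_mem (hx _ (mem_univ _))]
  · obtain ⟨i, hi⟩ : ∃ i, x i ∉ A i := by simpa using hx
    rw [indicator_of_notMem hx,
      Finset.prod_eq_zero (Finset.mem_univ i) (indicator_of_notMem hi _)]

theorem pi_update_eq_map_prod [DecidableEq ι] (μ ν : ∀ i, Measure (α i))
    [∀ i, IsProbabilityMeasure (μ i)] [∀ i, IsProbabilityMeasure (ν i)] (j : ι) :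
    Measure.pi (update μ j (ν j)) =
      ((Measure.pi μ).prod (Measure.pi ν)).map (fun p => update p.1 j (p.2 j)) := by
  have (i : ι) : SigmaFinite (update μ j (ν j) i) := by
    rcases eq_or_ne i j with rfl | hi <;> simp [*] <;> infer_instance
  refine pi_eq (μ := update μ j (ν j)) fun A hA => ?_
  have hpre : (fun p : (∀ i, α i) × (∀ i, α i) => update p.1 j (p.2 j)) ⁻¹' univ.pi A =
      univ.pi (update A j univ) ×ˢ (eval j ⁻¹' A j) := by
    ext p
    simp only [mem_preimage, mem_univ_pi, mem_prod, forall_update_iff p.1 fun i a => a ∈ A i,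
      forall_update_iff A fun i s => p.1 i ∈ s, mem_univ, true_and, eval, and_comm]
  rw [map_apply (by fun_prop) (.univ_pi hA), hpre, prod_prod, pi_pi,
    (measurePreserving_eval ν j).measure_preimage (hA j).nullMeasurableSet,
    Finset.prod_congr rfl fun i _ =>
      apply_update (fun i (m : Measure (α i)) => m (A i)) μ j (ν j) i,
    Finset.prod_congr rfl fun i _ => apply_update (fun i => μ i) A j univ i,
    Finset.prod_update_of_mem (Finset.mem_univ j), Finset.prod_update_of_mem (Finset.mem_univ j),
    measure_univ, one_mul, mul_comm]

end MeasureTheory.Measure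

section MonotoneGame

variable {ι : Type*} [Fintype ι] [DecidableEq ι] {α : ι → Type*}

def monotonicityGap (f : ι → (∀ i, α i) → ℝ) (s t : ∀ i, α i) : ℝ :=
  ∑ j, (f j s + f j t) - ∑ j, (f j (update s j (t j)) + f j (update t j (s j)))

variable [∀ i, MeasurableSpace (α i)] {f : ι → (∀ i, α i) → ℝ}

theorem measurable_monotonicityGap (hf : ∀ j, Measurable (f j)) :
    Measurable fun p : (∀ i, α i) × (∀ i, α i) => monotonicityGap f p.1 p.2 := by
  unfold monotonicityGap
  fun_prop

variable (μ ν : ∀ i, Measure (α i)) [∀ i, IsProbabilityMeasure (μ i)]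
  [∀ i, IsProbabilityMeasure (ν i)]

theorem integral_pi_update {E : Type*} [NormedAddCommGroup E] [NormedSpace ℝ E]
    {g : (∀ i, α i) → E} (hg : StronglyMeasurable g) (j : ι) :
    ∫ x, g x ∂Measure.pi (update μ j (ν j)) =
      ∫ p, g (update p.1 j (p.2 j)) ∂(Measure.pi μ).prod (Measure.pi ν) := by
  rw [Measure.pi_update_eq_map_prod, integral_map (by fun_prop) hg.aestronglyMeasurable]

theorem integral_monotonicityGap (hf : ∀ j, Measurable (f j))
    (hb : ∀ j, ∃ C, ∀ x, ‖f j x‖ ≤ C) :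
    ∫ p, monotonicityGap f p.1 p.2 ∂(Measure.pi μ).prod (Measure.pi ν) =
      ∑ j, ((∫ x, f j x ∂Measure.pi μ) + ∫ x, f j x ∂Measure.pi ν) -
        ∑ j, ((∫ x, f j x ∂Measure.pi (update μ j (ν j))) +
          ∫ x, f j x ∂Measure.pi (update ν j (μ j))) := by
  have hcomp (j : ι) {ψ : (∀ i, α i) × (∀ i, α i) → ∀ i, α i} (hψ : Measurable ψ) :
      Integrable (fun p => f j (ψ p)) ((Measure.pi μ).prod (Measure.pi ν)) := by
    obtain ⟨C, hC⟩ := hb j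
    exact .of_bound ((hf j).comp hψ).aestronglyMeasurable C (.of_forall fun p => hC _)
  have hpair (j : ι) {φ ψ : (∀ i, α i) × (∀ i, α i) → ∀ i, α i} (hφ : Measurable φ)
      (hψ : Measurable ψ) :
      Integrable (fun p => f j (φ p) + f j (ψ p)) ((Measure.pi μ).prod (Measure.pi ν)) :=
    (hcomp j hφ).add (hcomp j hψ)
  have hsplit (φ ψ : ι → (∀ i, α i) × (∀ i, α i) → ∀ i, α i) (hφ : ∀ j, Measurable (φ j))
      (hψ : ∀ j, Measurable (ψ j)) :
      ∫ p, ∑ j, (f j (φ j p) + f j (ψ j p)) ∂(Measure.pi μ).prod (Measure.pi ν) =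
        ∑ j, ((∫ p, f j (φ j p) ∂(Measure.pi μ).prod (Measure.pi ν)) +
          ∫ p, f j (ψ j p) ∂(Measure.pi μ).prod (Measure.pi ν)) := by
    rw [integral_finsetSum _ fun j _ => hpair j (hφ j) (hψ j)]
    exact Finset.sum_congr rfl fun j _ => integral_add (hcomp j (hφ j)) (hcomp j (hψ j))
  unfold monotonicityGap
  rw [integral_sub (integrable_finsetSum _ fun j _ => hpair j measurable_fst measurable_snd)
      (integrable_finsetSum _ fun j _ => hpair j (by fun_prop) (by fun_prop)),
    hsplit _ _ (fun _ => measurable_fst) (fun _ => measurable_snd),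
    hsplit _ _ (fun _ => by fun_prop) (fun _ => by fun_prop)]
  congr 1 <;> refine Finset.sum_congr rfl fun j _ => ?_
  · simp [integral_fun_fst, integral_fun_snd]
  · rw [integral_pi_update μ ν (hf j).stronglyMeasurable,
      integral_pi_update ν μ (hf j).stronglyMeasurable,
      ← integral_prod_swap fun p : (∀ i, α i) × (∀ i, α i) => f j (update p.2 j (p.1 j))]
    rfl

end MonotoneGame

/-- The mixed extension of a game with continuous costs on a compact metric space is
monotone (in the integrated sense) iff the underlying costs are monotone pointwise. -/
theorem mixed_monotone_iff_pure_monotone {S : Type*} [MetricSpace S] [CompactSpace S]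
    [MeasurableSpace S] [BorelSpace S] {N : ℕ}
    (f : Fin N → ((Fin N → S) → ℝ)) (hf : ∀ j, Continuous (f j)) :
    (∀ μ ν : Fin N → Measure S,
        (∀ j, IsProbabilityMeasure (μ j)) → (∀ j, IsProbabilityMeasure (ν j)) →
        ∑ j, ((∫ s, f j s ∂Measure.pi μ) + ∫ s, f j s ∂Measure.pi ν) ≥
          ∑ j, ((∫ s, f j s ∂Measure.pi (Function.update μ j (ν j))) +
            ∫ s, f j s ∂Measure.pi (Function.update ν j (μ j)))) ↔
      (∀ s t : Fin N → S,
        ∑ j, (f j s + f j t) ≥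
          ∑ j, (f j (Function.update s j (t j)) + f j (Function.update t j (s j)))) := by
  have hmeas (j : Fin N) : Measurable (f j) := (hf j).measurable
  have hbdd (j : Fin N) : ∃ C, ∀ x, ‖f j x‖ ≤ C :=
    (HasCompactSupport.of_compactSpace _).exists_bound_of_continuous (hf j)
  constructor
  · intro h s t
    have := h (fun i => Measure.dirac (s i)) (fun i => Measure.dirac (t i))
      (fun _ => inferInstance) (fun _ => inferInstance)
    rw [ge_iff_le, ← sub_nonneg, ← integral_monotonicityGap _ _ hmeas hbdd, Measure.pi_dirac,
      Measure.pi_dirac, Measure.dirac_prod_dirac,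
      integral_dirac' _ _ (measurable_monotonicityGap hmeas).stronglyMeasurable] at this
    exact sub_nonneg.mp this
  · intro h μ ν hμ hν
    rw [ge_iff_le, ← sub_nonneg, ← integral_monotonicityGap μ ν hmeas hbdd]
    exact integral_nonneg fun p => sub_nonneg.mpr (h p.1 p.2)
end

section
/- If k : S × S → ℝ is a continuous symmetric kernel that is nonnegative definite (meaning ∑_{i,j=1}^N k(s_i,s_j) c_i c_j ≥ 0 for all finite collections s_1,…,s_N ∈ S and c_1,…,c_N ∈ ℝ), then for all Borel probability measures μ, ν on S, ∫_S (f(s,μ) − f(s,ν)) d(μ−ν)(s) ≥ 0, where f(s,σ) = ∫_S k(s,t) dσ(t). -/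
open MeasureTheory

private lemma sum_comb {N : ℕ} (a b c d q : Fin N → Fin N → ℝ) :
    ((∑ i, ∑ j, a i j) - (∑ i, ∑ j, b i j)) - ((∑ i, ∑ j, c i j) - (∑ i, ∑ j, d i j))
      - (∑ i, ∑ j, q i j)
    = ∑ i, ∑ j, (a i j - b i j - c i j + d i j - q i j) := by
  simp only [Finset.sum_sub_distrib, Finset.sum_add_distrib]
  ring

/-- A continuous symmetric nonnegative-definite kernel yields a monotone static mean field
game cost `f(s,σ) = ∫ k(s,t) dσ(t)`. -/
theorem kernel_monotone {S : Type*} [MetricSpace S] [CompactSpace S]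
    [MeasurableSpace S] [BorelSpace S]
    (k : S → S → ℝ) (hk : Continuous fun p : S × S => k p.1 p.2)
    (hsymm : ∀ s t, k s t = k t s)
    (hpos : ∀ (N : ℕ) (s : Fin N → S) (c : Fin N → ℝ),
      0 ≤ ∑ i, ∑ j, k (s i) (s j) * c i * c j)
    (μ ν : Measure S) [IsProbabilityMeasure μ] [IsProbabilityMeasure ν] :
    (∫ s, ((∫ t, k s t ∂μ) - ∫ t, k s t ∂ν) ∂μ) -
      ∫ s, ((∫ t, k s t ∂μ) - ∫ t, k s t ∂ν) ∂ν ≥ 0 := by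
  classical
  have hS : Nonempty S := by
    by_contra h
    rw [not_nonempty_iff] at h
    have h1 : μ Set.univ = 1 := measure_univ
    rw [Set.univ_eq_empty_iff.mpr h] at h1
    simp at h1
  -- a uniform bound on k
  obtain ⟨C, hC0, hC⟩ : ∃ C : ℝ, 0 ≤ C ∧ ∀ s t : S, |k s t| ≤ C := by
    obtain ⟨p, -, hp⟩ := isCompact_univ.exists_isMaxOn Set.univ_nonempty
      (continuous_abs.comp hk).continuousOn
    exact ⟨|k p.1 p.2|, abs_nonneg _, fun s t => hp (Set.mem_univ (s, t))⟩
  have hkm : StronglyMeasurable fun p : S × S => k p.1 p.2 := hk.stronglyMeasurable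
  have hksint : ∀ (β : Measure S) [IsFiniteMeasure β] (s : S), Integrable (k s) β := by
    intro β _ s
    exact (hk.comp (Continuous.prodMk_right s)).integrable_of_hasCompactSupport
      (HasCompactSupport.of_compactSpace _)
  have hgm : ∀ (β : Measure S) [SFinite β], StronglyMeasurable fun s => ∫ t, k s t ∂β := by
    intro β _
    exact hkm.integral_prod_right'
  have hgint : ∀ (α β : Measure S) [IsProbabilityMeasure α] [IsProbabilityMeasure β],
      Integrable (fun s => ∫ t, k s t ∂β) α := by
    intro α β _ _
    refine Integrable.mono' (integrable_const C) (hgm β).aestronglyMeasurable ?_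
    filter_upwards with s
    calc ‖∫ t, k s t ∂β‖ ≤ C * (β Set.univ).toReal :=
          norm_integral_le_of_norm_le_const (Filter.Eventually.of_forall fun t => by
            simpa using hC s t)
      _ = C := by simp
  have hE : (∫ s, ((∫ t, k s t ∂μ) - ∫ t, k s t ∂ν) ∂μ) -
      ∫ s, ((∫ t, k s t ∂μ) - ∫ t, k s t ∂ν) ∂ν
      = ((∫ s, (∫ t, k s t ∂μ) ∂μ) - (∫ s, (∫ t, k s t ∂ν) ∂μ))
        - ((∫ s, (∫ t, k s t ∂μ) ∂ν) - (∫ s, (∫ t, k s t ∂ν) ∂ν)) := by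
    rw [integral_sub (hgint μ μ) (hgint μ ν), integral_sub (hgint ν μ) (hgint ν ν)]
  rw [ge_iff_le, hE]
  have key : ∀ ε : ℝ, 0 < ε →
      -(4 * ε) ≤ ((∫ s, (∫ t, k s t ∂μ) ∂μ) - (∫ s, (∫ t, k s t ∂ν) ∂μ))
        - ((∫ s, (∫ t, k s t ∂μ) ∂ν) - (∫ s, (∫ t, k s t ∂ν) ∂ν)) := by
    intro ε hε
    obtain ⟨δ, hδ0, hδ⟩ := Metric.uniformContinuous_iff.mp
      (CompactSpace.uniformContinuous_of_continuous hk) ε hε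
    obtain ⟨F, hF⟩ := isCompact_univ.elim_finite_subcover (fun x : S => Metric.ball x δ)
      (fun x => Metric.isOpen_ball) (fun s _ => Set.mem_iUnion.2 ⟨s, Metric.mem_ball_self hδ0⟩)
    set N := F.card with hN
    set x : Fin N → S := fun i => (F.equivFin.symm i : S) with hx
    set A : Fin N → Set S := fun i =>
      Metric.ball (x i) δ \ ⋃ (j : Fin N) (_ : j < i), Metric.ball (x j) δ with hA
    have hAmeas : ∀ i, MeasurableSet (A i) := fun i =>
      measurableSet_ball.diff
        (MeasurableSet.iUnion fun j => MeasurableSet.iUnion fun _ => measurableSet_ball)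
    have hAball : ∀ i, A i ⊆ Metric.ball (x i) δ := fun i => Set.diff_subset
    have hAdisj : Pairwise (Function.onFun Disjoint A) := by
      intro i j hij
      rcases hij.lt_or_gt with h | h
      · exact Set.disjoint_left.2 fun a hai haj =>
          haj.2 (Set.mem_iUnion.2 ⟨i, Set.mem_iUnion.2 ⟨h, hai.1⟩⟩)
      · exact Set.disjoint_right.2 fun a haj hai =>
          hai.2 (Set.mem_iUnion.2 ⟨j, Set.mem_iUnion.2 ⟨h, haj.1⟩⟩)
    have hAunion : ⋃ i, A i = Set.univ := by
      apply Set.eq_univ_of_forall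
      intro s
      have hs : s ∈ ⋃ y ∈ F, Metric.ball y δ := hF trivial
      obtain ⟨y, hyF, hy⟩ := Set.mem_iUnion₂.mp hs
      have hne : {i : Fin N | s ∈ Metric.ball (x i) δ}.Nonempty := by
        refine ⟨F.equivFin ⟨y, hyF⟩, ?_⟩
        simpa [hx, Equiv.symm_apply_apply] using hy
      obtain ⟨i, hi, hmin⟩ := (wellFounded_lt (α := Fin N)).has_min _ hne
      refine Set.mem_iUnion.2 ⟨i, hi, fun hmem => ?_⟩
      obtain ⟨j, hj⟩ := Set.mem_iUnion.mp hmem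
      obtain ⟨hji, hsj⟩ := Set.mem_iUnion.mp hj
      exact hmin j hsj hji
    have hdecomp : ∀ (α : Measure S) [IsFiniteMeasure α] (f : S → ℝ), Integrable f α →
        ∫ s, f s ∂α = ∑ i, ∫ s in A i, f s ∂α := by
      intro α _ f hf
      rw [← setIntegral_univ (f := f), ← hAunion]
      exact integral_iUnion_fintype hAmeas hAdisj fun i => hf.integrableOn
    have hmass : ∀ (α : Measure S) [IsProbabilityMeasure α],
        ∑ i, (α (A i)).toReal = 1 := by
      intro α _
      have h1 : ∫ _ : S, (1 : ℝ) ∂α = ∑ i, ∫ _ in A i, (1 : ℝ) ∂α :=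
        hdecomp α _ (integrable_const 1)
      simpa [setIntegral_const, measureReal_def] using h1.symm
    set g : Measure S → Fin N → S → ℝ := fun β j s => ∫ t in A j, k s t ∂β with hg
    have hgm' : ∀ (β : Measure S) [SFinite β] (j : Fin N), StronglyMeasurable (g β j) := by
      intro β _ j
      exact hkm.integral_prod_right' (ν := β.restrict (A j))
    have hgint' : ∀ (α β : Measure S) [IsProbabilityMeasure α] [IsProbabilityMeasure β]
        (j : Fin N), Integrable (g β j) α := by
      intro α β _ _ j
      refine Integrable.mono' (integrable_const C) (hgm' β j).aestronglyMeasurable ?_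
      filter_upwards with s
      simp only [hg]
      calc ‖∫ t in A j, k s t ∂β‖ ≤ C * (β (A j)).toReal := by
            exact norm_setIntegral_le_of_norm_le_const (measure_lt_top _ _)
              (fun t _ => by rw [Real.norm_eq_abs]; exact hC s t)
        _ ≤ C * 1 := by
            gcongr
            exact (ENNReal.toReal_le_of_le_ofReal one_pos.le (by simpa using prob_le_one))
        _ = C := mul_one C
    have hinner : ∀ (β : Measure S) [IsProbabilityMeasure β] (i j : Fin N) (s : S), s ∈ A i →
        |g β j s - k (x i) (x j) * (β (A j)).toReal| ≤ ε * (β (A j)).toReal := by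
      intro β _ i j s hs
      have heq : g β j s - k (x i) (x j) * (β (A j)).toReal
          = ∫ t in A j, (k s t - k (x i) (x j)) ∂β := by
        rw [integral_sub ((hksint β s).integrableOn)
          integrableOn_const, setIntegral_const, measureReal_def, smul_eq_mul,
          mul_comm]
      rw [heq, ← Real.norm_eq_abs]
      refine norm_setIntegral_le_of_norm_le_const (measure_lt_top _ _) ?_
      intro t ht
      have h1 : dist s (x i) < δ := Metric.mem_ball.mp (hAball i hs)
      have h2 : dist t (x j) < δ := Metric.mem_ball.mp (hAball j ht)
      have h3 := hδ (a := (s, t)) (b := (x i, x j)) (by rw [Prod.dist_eq]; exact max_lt h1 h2)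
      rw [Real.dist_eq] at h3
      exact h3.le
    have houter : ∀ (α β : Measure S) [IsProbabilityMeasure α] [IsProbabilityMeasure β]
        (i j : Fin N),
        |(∫ s in A i, g β j s ∂α) - k (x i) (x j) * ((α (A i)).toReal * (β (A j)).toReal)|
          ≤ ε * ((α (A i)).toReal * (β (A j)).toReal) := by
      intro α β _ _ i j
      have heq : (∫ s in A i, g β j s ∂α)
            - k (x i) (x j) * ((α (A i)).toReal * (β (A j)).toReal)
          = ∫ s in A i, (g β j s - k (x i) (x j) * (β (A j)).toReal) ∂α := by
        rw [integral_sub (hgint' α β j).integrableOn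
          integrableOn_const, setIntegral_const, measureReal_def, smul_eq_mul]
        ring
      rw [heq, ← Real.norm_eq_abs]
      calc ‖∫ s in A i, (g β j s - k (x i) (x j) * (β (A j)).toReal) ∂α‖
          ≤ (ε * (β (A j)).toReal) * (α (A i)).toReal :=
            norm_setIntegral_le_of_norm_le_const (measure_lt_top _ _)
              (fun s hs => by rw [Real.norm_eq_abs]; exact hinner β i j s hs)
        _ = ε * ((α (A i)).toReal * (β (A j)).toReal) := by ring
    have hJ : ∀ (α β : Measure S) [IsProbabilityMeasure α] [IsProbabilityMeasure β],
        ∫ s, (∫ t, k s t ∂β) ∂α = ∑ i, ∑ j, ∫ s in A i, g β j s ∂α := by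
      intro α β _ _
      rw [hdecomp α _ (hgint α β)]
      refine Finset.sum_congr rfl fun i _ => ?_
      have h1 : ∀ s : S, (∫ t, k s t ∂β) = ∑ j, g β j s := fun s =>
        hdecomp β (k s) (hksint β s)
      simp_rw [h1]
      exact integral_finset_sum Finset.univ fun j _ => (hgint' α β j).integrableOn
    set c : Fin N → ℝ := fun i => (μ (A i)).toReal - (ν (A i)).toReal with hc
    have hQ : 0 ≤ ∑ i, ∑ j, k (x i) (x j) * c i * c j := hpos N x c
    set u : Fin N → Fin N → ℝ := fun i j =>
      ((∫ s in A i, g μ j s ∂μ) - (∫ s in A i, g ν j s ∂μ)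
          - (∫ s in A i, g μ j s ∂ν) + (∫ s in A i, g ν j s ∂ν))
        - k (x i) (x j) * c i * c j with hu
    have hterm : ∀ i j : Fin N,
        |u i j|
        ≤ ε * ((μ (A i)).toReal * (μ (A j)).toReal + (μ (A i)).toReal * (ν (A j)).toReal
            + (ν (A i)).toReal * (μ (A j)).toReal + (ν (A i)).toReal * (ν (A j)).toReal) := by
      intro i j
      simp only [hu]
      have h1 := houter μ μ i j
      have h2 := houter μ ν i j
      have h3 := houter ν μ i j
      have h4 := houter ν ν i j
      have hid : k (x i) (x j) * c i * c j
          = k (x i) (x j) * ((μ (A i)).toReal * (μ (A j)).toReal)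
            - k (x i) (x j) * ((μ (A i)).toReal * (ν (A j)).toReal)
            - k (x i) (x j) * ((ν (A i)).toReal * (μ (A j)).toReal)
            + k (x i) (x j) * ((ν (A i)).toReal * (ν (A j)).toReal) := by
        simp only [hc]; ring
      rw [abs_le] at h1 h2 h3 h4 ⊢
      constructor <;> [linarith [h1.1, h2.2, h3.2, h4.1, h1.2, h2.1, h3.1, h4.2];
        linarith [h1.1, h2.2, h3.2, h4.1, h1.2, h2.1, h3.1, h4.2]]
    have hcomb : (((∫ s, (∫ t, k s t ∂μ) ∂μ) - (∫ s, (∫ t, k s t ∂ν) ∂μ))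
          - ((∫ s, (∫ t, k s t ∂μ) ∂ν) - (∫ s, (∫ t, k s t ∂ν) ∂ν)))
          - (∑ i, ∑ j, k (x i) (x j) * c i * c j)
        = ∑ i, ∑ j, u i j := by
      simp only [hu]
      rw [hJ μ μ, hJ μ ν, hJ ν μ, hJ ν ν]
      exact sum_comb _ _ _ _ _
    have h4sum : ∑ i : Fin N, ∑ j : Fin N,
        ε * ((μ (A i)).toReal * (μ (A j)).toReal + (μ (A i)).toReal * (ν (A j)).toReal
          + (ν (A i)).toReal * (μ (A j)).toReal + (ν (A i)).toReal * (ν (A j)).toReal)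
        = 4 * ε := by
      have hm1 : ∑ i, (μ (A i)).toReal = 1 := hmass μ
      have hm2 : ∑ i, (ν (A i)).toReal = 1 := hmass ν
      simp only [mul_add, Finset.sum_add_distrib, ← Finset.mul_sum, ← Finset.sum_mul]
      rw [hm1, hm2]
      ring
    have habs : |(((∫ s, (∫ t, k s t ∂μ) ∂μ) - (∫ s, (∫ t, k s t ∂ν) ∂μ))
          - ((∫ s, (∫ t, k s t ∂μ) ∂ν) - (∫ s, (∫ t, k s t ∂ν) ∂ν)))
          - (∑ i, ∑ j, k (x i) (x j) * c i * c j)| ≤ 4 * ε := by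
      rw [hcomb]
      calc |∑ i, ∑ j, u i j| ≤ ∑ i, |∑ j, u i j| := Finset.abs_sum_le_sum_abs _ _
        _ ≤ ∑ i, ∑ j, |u i j| := Finset.sum_le_sum fun i _ => Finset.abs_sum_le_sum_abs _ _
        _ ≤ ∑ i : Fin N, ∑ j : Fin N,
            ε * ((μ (A i)).toReal * (μ (A j)).toReal + (μ (A i)).toReal * (ν (A j)).toReal
              + (ν (A i)).toReal * (μ (A j)).toReal + (ν (A i)).toReal * (ν (A j)).toReal) :=
            Finset.sum_le_sum fun i _ => Finset.sum_le_sum fun j _ => hterm i j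
        _ = 4 * ε := h4sum
    have := abs_le.mp habs
    linarith [this.1, hQ]
  by_contra h
  push_neg at h
  have h8 : (0:ℝ) < -(((∫ s, (∫ t, k s t ∂μ) ∂μ) - (∫ s, (∫ t, k s t ∂ν) ∂μ))
      - ((∫ s, (∫ t, k s t ∂μ) ∂ν) - (∫ s, (∫ t, k s t ∂ν) ∂ν))) / 8 := by linarith
  have := key _ h8
  linarith
end

section
/- Let η be a centered nondegenerate Gaussian measure on a separable Banach space X. If (μ^k) is a bounded sequence in X* that converges weakly in H = closure of X* in L²(X,η) to ξ ∈ H, then (μ^k) converges in the weak* topology of X* to some μ ∈ X*, and μ = ξ η-almost everywhere. -/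
open MeasureTheory ProbabilityTheory Filter

lemma seq_alaoglu {X : Type*} [NormedAddCommGroup X] [NormedSpace ℝ X]
    [SecondCountableTopology X]
    (ν : ℕ → (X →L[ℝ] ℝ)) (C : ℝ) (hbdd : ∀ k, ‖ν k‖ ≤ C) :
    ∃ (φ : ℕ → ℕ) (μ : X →L[ℝ] ℝ), StrictMono φ ∧
      ∀ x, Tendsto (fun k => ν (φ k) x) atTop (nhds (μ x)) := by
  have hC : (0:ℝ) ≤ C := le_trans (norm_nonneg _) (hbdd 0)
  obtain ⟨u, hu⟩ := TopologicalSpace.exists_dense_seq X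
  have hnorm : ∀ k (x : X), |ν k x| ≤ C * ‖x‖ := fun k x =>
    ((ν k).le_opNorm x).trans (mul_le_mul_of_nonneg_right (hbdd k) (norm_nonneg _))
  set S : Set (ℕ → ℝ) := Set.pi Set.univ (fun n => Set.Icc (-(C * ‖u n‖)) (C * ‖u n‖)) with hS
  have hScomp : IsCompact S := isCompact_univ_pi fun n => isCompact_Icc
  have hmem : ∀ k, (fun n => ν k (u n)) ∈ S := fun k n _ => abs_le.mp (hnorm k (u n))
  obtain ⟨f, -, φ, hφ, hconv⟩ := hScomp.isSeqCompact hmem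
  rw [tendsto_pi_nhds] at hconv
  replace hconv : ∀ n, Tendsto (fun k => ν (φ k) (u n)) atTop (nhds (f n)) :=
    fun n => by simpa using hconv n
  have key : ∀ x : X, CauchySeq (fun k => ν (φ k) x) := by
    intro x
    rw [Metric.cauchySeq_iff]
    intro ε hε
    have hC1 : (0:ℝ) < C + 1 := by linarith
    obtain ⟨n, hn⟩ := hu.exists_dist_lt x (show (0:ℝ) < ε / 3 / (C + 1) by positivity)
    obtain ⟨N, hN⟩ := Metric.cauchySeq_iff.mp (hconv n).cauchySeq (ε / 3) (by linarith)
    refine ⟨N, fun j hj k hk => ?_⟩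
    have hbound : ∀ m, dist (ν (φ m) x) (ν (φ m) (u n)) ≤ ε / 3 := by
      intro m
      rw [dist_eq_norm, ← map_sub]
      calc ‖ν (φ m) (x - u n)‖ ≤ C * ‖x - u n‖ := by
            simpa [Real.norm_eq_abs] using hnorm (φ m) (x - u n)
        _ ≤ (C + 1) * (ε / 3 / (C + 1)) := by
            have : ‖x - u n‖ ≤ ε / 3 / (C + 1) := by
              rw [← dist_eq_norm]; exact hn.le
            nlinarith [norm_nonneg (x - u n)]
        _ = ε / 3 := by field_simp
    calc dist (ν (φ j) x) (ν (φ k) x)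
        ≤ dist (ν (φ j) x) (ν (φ j) (u n)) + dist (ν (φ j) (u n)) (ν (φ k) (u n))
            + dist (ν (φ k) (u n)) (ν (φ k) x) := dist_triangle4 _ _ _ _
      _ < ε / 3 + ε / 3 + ε / 3 := by
          have h1 := hbound j
          have h2 := hN j hj k hk
          have h3 := (dist_comm (ν (φ k) x) (ν (φ k) (u n))) ▸ hbound k
          linarith
      _ = ε := by ring
  set g : X → ℝ := fun x => limUnder atTop fun k => ν (φ k) x with hg
  have htend : ∀ x, Tendsto (fun k => ν (φ k) x) atTop (nhds (g x)) :=
    fun x => (key x).tendsto_limUnder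
  have hgb : ∀ x, ‖g x‖ ≤ C * ‖x‖ := fun x =>
    le_of_tendsto (htend x).norm (Eventually.of_forall fun k => by
      simpa [Real.norm_eq_abs] using hnorm (φ k) x)
  refine ⟨φ, LinearMap.mkContinuous
    { toFun := g
      map_add' := fun x y => tendsto_nhds_unique
        (by simpa [map_add] using htend (x + y)) ((htend x).add (htend y))
      map_smul' := fun c x => tendsto_nhds_unique
        (by simpa [_root_.map_smul, smul_eq_mul] using htend (c • x))
        (by simpa [smul_eq_mul] using (htend x).const_mul c) } C hgb, hφ, htend⟩

lemma ae_eq_of_subseq_tendsto {X : Type*} [NormedAddCommGroup X] [NormedSpace ℝ X]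
    [MeasurableSpace X] [BorelSpace X]
    (η : Measure X) [IsProbabilityMeasure η]
    (μs : ℕ → (X →L[ℝ] ℝ)) (C : ℝ) (hbdd : ∀ k, ‖μs k‖ ≤ C)
    (ξ : X → ℝ) (hξmeas : Measurable ξ) (hξ : MemLp ξ 2 η)
    (hweak : ∀ ζ : X → ℝ, MemLp ζ 2 η →
      Tendsto (fun k => ∫ x, (μs k) x * ζ x ∂η) atTop (nhds (∫ x, ξ x * ζ x ∂η)))
    (φ : ℕ → ℕ) (hφ : Tendsto φ atTop atTop)
    (μ : X →L[ℝ] ℝ) (h : ∀ x, Tendsto (fun k => (μs (φ k)) x) atTop (nhds (μ x))) :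
    ∀ᵐ x ∂η, μ x = ξ x := by
  have hC : (0:ℝ) ≤ C := le_trans (norm_nonneg _) (hbdd 0)
  have hnorm : ∀ k (x : X), |μs k x| ≤ C * ‖x‖ := fun k x =>
    ((μs k).le_opNorm x).trans (mul_le_mul_of_nonneg_right (hbdd k) (norm_nonneg _))
  have hμb : ∀ x, |μ x| ≤ C * ‖x‖ := fun x =>
    le_of_tendsto (h x).abs (Eventually.of_forall fun k => hnorm (φ k) x)
  have key : ∀ n : ℕ, ∀ᵐ x ∂η, x ∈ Metric.closedBall (0:X) n → μ x = ξ x := by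
    intro n
    set B : Set X := Metric.closedBall (0:X) n with hBdef
    have hB : MeasurableSet B := Metric.isClosed_closedBall.measurableSet
    have hxB : ∀ x ∈ B, ‖x‖ ≤ (n:ℝ) := by
      intro x hx
      simpa [dist_eq_norm] using Metric.mem_closedBall.mp hx
    set ζ : X → ℝ := B.indicator (fun x => μ x - ξ x) with hζdef
    have hζmeas : Measurable ζ := (μ.continuous.measurable.sub hξmeas).indicator hB
    have hζeq : ζ = B.indicator (fun x => μ x) - B.indicator ξ := by
      funext x
      by_cases hx : x ∈ B <;>
        simp [hζdef, hx, Set.indicator_of_mem, Set.indicator_of_notMem]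
    have hζ : MemLp ζ 2 η := by
      rw [hζeq]
      refine MemLp.sub ?_ (hξ.indicator hB)
      refine MemLp.of_bound
        ((μ.continuous.measurable.indicator hB).aestronglyMeasurable) (C * n)
        (Eventually.of_forall fun x => ?_)
      by_cases hx : x ∈ B
      · rw [Set.indicator_of_mem hx]
        exact (hμb x).trans (mul_le_mul_of_nonneg_left (hxB x hx) hC)
      · rw [Set.indicator_of_notMem hx]
        simp
        positivity
    have hζbd : ∀ k (x : X), ‖μs k x * ζ x‖ ≤ (C * n) * |ζ x| := by
      intro k x
      by_cases hx : x ∈ B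
      · rw [Real.norm_eq_abs, abs_mul]
        refine mul_le_mul_of_nonneg_right ((hnorm k x).trans ?_) (abs_nonneg _)
        exact mul_le_mul_of_nonneg_left (hxB x hx) hC
      · simp [hζdef, Set.indicator_of_notMem hx]
    have hζint : Integrable ζ η := hζ.integrable one_le_two
    have h2 : Tendsto (fun k => ∫ x, (μs (φ k)) x * ζ x ∂η) atTop
        (nhds (∫ x, ξ x * ζ x ∂η)) := (hweak ζ hζ).comp hφ
    have h3 : Tendsto (fun k => ∫ x, (μs (φ k)) x * ζ x ∂η) atTop
        (nhds (∫ x, μ x * ζ x ∂η)) := by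
      refine tendsto_integral_of_dominated_convergence (fun x => (C * n) * |ζ x|)
        (fun k => ((μs (φ k)).continuous.measurable.mul hζmeas).aestronglyMeasurable)
        (hζint.abs.const_mul _)
        (fun k => Eventually.of_forall fun x => hζbd (φ k) x)
        (Eventually.of_forall fun x => (h x).mul tendsto_const_nhds)
    have heq : ∫ x, μ x * ζ x ∂η = ∫ x, ξ x * ζ x ∂η := tendsto_nhds_unique h3 h2
    have hμζ : Integrable (fun x => μ x * ζ x) η := by
      refine Integrable.mono' (hζint.abs.const_mul (C * n))
        ((μ.continuous.measurable.mul hζmeas).aestronglyMeasurable)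
        (Eventually.of_forall fun x => ?_)
      by_cases hx : x ∈ B
      · rw [Real.norm_eq_abs, abs_mul]
        exact mul_le_mul_of_nonneg_right
          ((hμb x).trans (mul_le_mul_of_nonneg_left (hxB x hx) hC)) (abs_nonneg _)
      · simp [hζdef, Set.indicator_of_notMem hx]
    have hξζ : Integrable (fun x => ξ x * ζ x) η := by
      have : MemLp (ξ • ζ) 1 η := MemLp.smul (hpqr := ⟨by rw [ENNReal.inv_two_add_inv_two, inv_one]⟩) hζ hξ
      exact memLp_one_iff_integrable.mp this
    have hsq : ∫ x, ζ x ^ 2 ∂η = 0 := by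
      have : (fun x => ζ x ^ 2) = fun x => μ x * ζ x - ξ x * ζ x := by
        funext x
        by_cases hx : x ∈ B <;>
          simp [hζdef, Set.indicator_of_mem, Set.indicator_of_notMem, hx] <;> ring
      rw [this, integral_sub hμζ hξζ, heq, sub_self]
    have hzero : ∀ᵐ x ∂η, ζ x ^ 2 = 0 := by
      have := (integral_eq_zero_iff_of_nonneg (fun x => sq_nonneg (ζ x))
        hζ.integrable_sq).mp hsq
      filter_upwards [this] with x hx using hx
    filter_upwards [hzero] with x hx hxB'
    have : ζ x = 0 := by
      have := pow_eq_zero_iff (n := 2) (by norm_num) |>.mp hx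
      exact this
    rw [hζdef, Set.indicator_of_mem hxB'] at this
    linarith [this]
  have hall : ∀ᵐ x ∂η, ∀ n : ℕ, x ∈ Metric.closedBall (0:X) n → μ x = ξ x :=
    (ae_all_iff).mpr key
  filter_upwards [hall] with x hx
  obtain ⟨n, hn⟩ := exists_nat_ge ‖x‖
  exact hx n (by simpa [Metric.mem_closedBall, dist_eq_norm] using hn)

/-- A bounded sequence in `X*` converging weakly in `L²(X,η)` (for a centered nondegenerate
Gaussian measure `η`) to `ξ` converges weak* in `X*` to a limit agreeing with `ξ` a.e. -/
theorem weakL2_implies_weakStar {X : Type*} [NormedAddCommGroup X] [NormedSpace ℝ X]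
    [SecondCountableTopology X] [MeasurableSpace X] [BorelSpace X]
    (η : Measure X) [IsProbabilityMeasure η]
    (hGauss : ∀ μ : X →L[ℝ] ℝ, μ ≠ 0 → ∃ v : NNReal, 0 < v ∧
      Measure.map μ η = gaussianReal 0 v)
    (μs : ℕ → (X →L[ℝ] ℝ)) (C : ℝ) (hbdd : ∀ k, ‖μs k‖ ≤ C)
    (ξ : X → ℝ) (hξmeas : Measurable ξ) (hξ : MemLp ξ 2 η)
    (hweak : ∀ ζ : X → ℝ, MemLp ζ 2 η →
      Tendsto (fun k => ∫ x, (μs k) x * ζ x ∂η) atTop (nhds (∫ x, ξ x * ζ x ∂η))) :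
    ∃ μ : X →L[ℝ] ℝ,
      (∀ x : X, Tendsto (fun k => (μs k) x) atTop (nhds (μ x))) ∧
        (∀ᵐ x ∂η, μ x = ξ x) := by
  -- uniqueness of limits that agree with ξ a.e.
  have huniq : ∀ μ μ' : X →L[ℝ] ℝ, (∀ᵐ x ∂η, μ x = ξ x) → (∀ᵐ x ∂η, μ' x = ξ x) →
      μ' = μ := by
    intro μ μ' hae hae'
    by_contra hne
    have hdiff : μ' - μ ≠ 0 := sub_ne_zero.mpr hne
    obtain ⟨v, hv, hmap⟩ := hGauss (μ' - μ) hdiff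
    have hmeas : Measurable ⇑(μ' - μ) := (μ' - μ).continuous.measurable
    have hA : MeasurableSet ((⇑(μ' - μ)) ⁻¹' {0}) := hmeas (measurableSet_singleton 0)
    have h0 : η ((⇑(μ' - μ)) ⁻¹' {0}) = 0 := by
      rw [← Measure.map_apply hmeas (measurableSet_singleton 0), hmap]
      exact gaussianReal_absolutelyContinuous 0 (by exact_mod_cast hv.ne')
        (measure_singleton 0)
    have hc : η ((⇑(μ' - μ)) ⁻¹' {0})ᶜ = 0 := by
      have hae2 : ∀ᵐ x ∂η, (μ' - μ) x = 0 := by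
        filter_upwards [hae, hae'] with x h1 h2
        simp [ContinuousLinearMap.sub_apply, h1, h2]
      have : ((⇑(μ' - μ)) ⁻¹' {0})ᶜ = {x | ¬ ((μ' - μ) x = 0)} := by
        ext x; simp
      rw [this, ← ae_iff]
      exact hae2
    have huniv := measure_add_measure_compl (μ := η) hA
    rw [h0, hc, measure_univ] at huniv
    simp at huniv
  obtain ⟨φ, μ, hφmono, hconv⟩ := seq_alaoglu μs C hbdd
  have hae := ae_eq_of_subseq_tendsto η μs C hbdd ξ hξmeas hξ hweak φ
    hφmono.tendsto_atTop μ hconv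
  refine ⟨μ, fun x => ?_, hae⟩
  apply tendsto_of_subseq_tendsto
  intro ns hns
  obtain ⟨ms, μ', hms, hconv'⟩ := seq_alaoglu (μs ∘ ns) C (fun k => hbdd _)
  have hconv'' : ∀ y, Tendsto (fun k => (μs ((ns ∘ ms) k)) y) atTop (nhds (μ' y)) :=
    fun y => hconv' y
  have hae' := ae_eq_of_subseq_tendsto η μs C hbdd ξ hξmeas hξ hweak (ns ∘ ms)
    (hns.comp hms.tendsto_atTop) μ' hconv''
  have hμμ' : μ' = μ := huniq μ μ' hae hae'
  exact ⟨ms, by simpa [hμμ'] using hconv'' x⟩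
end
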